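/- arXiv:1501.05761 — 3 statements merged into one kernel-verified Lean document; each statement's English description precedes it below -/
import Mathlib

section
/- Let H be a Hilbert space, P, Q commuting orthogonal projections, and T a bounded operator. The iterated commutator [P-(1-P),[Q-(1-Q),T]] is bounded with norm at most 4·max of the norms of the four operators PQ T Q⊥P⊥, PQ⊥ T Q P⊥, P⊥Q T Q⊥P, P⊥Q⊥ T Q P; conversely each of these four operators has norm at most (1/4)·‖[P-(1-P),[Q-(1-Q),T]]‖. -/
/-!
With `P⁺ = P`, `P⁻ = 1 - P`, the products `E_{ab} = P^a Q^b` are four mutually orthogonal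
projections summing to `1`. The iterated commutator is `4 S` with
`S = E₊₊ T E₋₋ - E₊₋ T E₋₊ - E₋₊ T E₊₋ + E₋₋ T E₊₊`, a sum of four operators with mutually
orthogonal ranges and mutually orthogonal initial spaces. By Pythagoras, and Bessel's inequality
for the initial projections, `‖S‖` is at most the largest of the four norms; conversely each
summand is the compression `E_i S E_j` of `S` by projections of norm at most `1`.
-/

section Pythagoras

variable {𝕜 E ι : Type*} [RCLike 𝕜] [NormedAddCommGroup E] [InnerProductSpace 𝕜 E]

theorem norm_sum_sq_eq_sum_norm_sq_of_pairwise_inner_eq_zero (s : Finset ι) {v : ι → E}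
    (hv : Pairwise fun i j => inner 𝕜 (v i) (v j) = 0) :
    ‖∑ i ∈ s, v i‖ ^ 2 = ∑ i ∈ s, ‖v i‖ ^ 2 := by
  classical
  induction s using Finset.induction_on with
  | empty => simp
  | insert a s ha ih =>
    have h : inner 𝕜 (v a) (∑ i ∈ s, v i) = 0 :=
      (inner_sum _ _ _).trans <| Finset.sum_eq_zero fun i hi => hv (ne_of_mem_of_not_mem hi ha).symm
    rw [Finset.sum_insert ha, Finset.sum_insert ha, ← ih, sq, sq, sq,
      norm_add_sq_eq_norm_sq_add_norm_sq_of_inner_eq_zero _ _ h]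

end Pythagoras

theorem IsIdempotentElem.norm_mul_apply_le {𝕜 E : Type*} [NontriviallyNormedField 𝕜]
    [SeminormedAddCommGroup E] [NormedSpace 𝕜 E] {R : E →L[𝕜] E} (hR : IsIdempotentElem R)
    (A : E →L[𝕜] E) (x : E) : ‖(A * R) x‖ ≤ ‖A * R‖ * ‖R x‖ := by
  have h : (A * R) x = (A * R) (R x) := by
    rw [mul_apply_eq_comp, mul_apply_eq_comp, ← mul_apply_eq_comp R R, hR.eq]
  rw [h]
  exact (A * R).le_opNorm _

theorem IsStarProjection.sum {A ι : Type*} [NonUnitalSemiring A] [StarRing A] (s : Finset ι)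
    {p : ι → A} (hp : ∀ i, IsStarProjection (p i)) (horth : Pairwise fun i j => p i * p j = 0) :
    IsStarProjection (∑ i ∈ s, p i) := by
  classical
  induction s using Finset.induction_on with
  | empty => exact Finset.sum_empty (f := p) ▸ IsStarProjection.zero A
  | insert a s ha ih =>
    rw [Finset.sum_insert ha]
    exact (hp a).add ih <| (Finset.mul_sum _ _ _).trans <|
      Finset.sum_eq_zero fun i hi => horth (ne_of_mem_of_not_mem hi ha).symm

section Operators

variable {𝕜 E ι : Type*} [RCLike 𝕜] [NormedAddCommGroup E] [InnerProductSpace 𝕜 E]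
  [CompleteSpace E]

theorem IsSelfAdjoint.inner_apply_apply_eq_zero_of_mul_eq_zero {A B : E →L[𝕜] E}
    (hA : IsSelfAdjoint A) (hAB : A * B = 0) (x y : E) : inner 𝕜 (A x) (B y) = 0 := by
  rw [hA.isSymmetric.apply_clm, ← mul_apply_eq_comp, hAB, zero_apply, inner_zero_right]

theorem sum_norm_apply_sq_le_norm_sq (s : Finset ι) {p : ι → E →L[𝕜] E}
    (hp : ∀ i, IsStarProjection (p i)) (horth : Pairwise fun i j => p i * p j = 0) (x : E) :
    ∑ i ∈ s, ‖p i x‖ ^ 2 ≤ ‖x‖ ^ 2 := by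
  rw [← norm_sum_sq_eq_sum_norm_sq_of_pairwise_inner_eq_zero (𝕜 := 𝕜) s fun i j hij =>
    (hp i).isSelfAdjoint.inner_apply_apply_eq_zero_of_mul_eq_zero (horth hij) x x,
    ← sum_apply]
  gcongr
  calc ‖(∑ i ∈ s, p i) x‖ ≤ ‖∑ i ∈ s, p i‖ * ‖x‖ := ContinuousLinearMap.le_opNorm _ _
    _ ≤ ‖x‖ :=
      mul_le_of_le_one_left (norm_nonneg x) ((IsStarProjection.sum s hp horth).norm_le _)

theorem norm_sum_mul_mul_le [Fintype ι] [Nonempty ι] {L R : ι → E →L[𝕜] E}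
    (hL : ∀ i, IsSelfAdjoint (L i)) (hLorth : Pairwise fun i j => L i * L j = 0)
    (hR : ∀ i, IsStarProjection (R i)) (hRorth : Pairwise fun i j => R i * R j = 0)
    (X : ι → E →L[𝕜] E) {M : ℝ} (hX : ∀ i, ‖L i * X i * R i‖ ≤ M) : ‖∑ i, L i * X i * R i‖ ≤ M := by
  have hM : 0 ≤ M := (norm_nonneg _).trans (hX (Classical.arbitrary ι))
  refine ContinuousLinearMap.opNorm_le_bound _ hM fun x => ?_
  have hsq : ‖(∑ i, L i * X i * R i) x‖ ^ 2 ≤ (M * ‖x‖) ^ 2 := calc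
    ‖(∑ i, L i * X i * R i) x‖ ^ 2 = ∑ i, ‖(L i * X i * R i) x‖ ^ 2 := by
      rw [sum_apply]
      refine norm_sum_sq_eq_sum_norm_sq_of_pairwise_inner_eq_zero (𝕜 := 𝕜) _ fun i j hij => ?_
      simp only [mul_assoc, mul_apply_eq_comp]
      exact (hL i).inner_apply_apply_eq_zero_of_mul_eq_zero (hLorth hij) _ _
    _ ≤ ∑ i, (M * ‖R i x‖) ^ 2 := by
      gcongr with i
      exact ((hR i).isIdempotentElem.norm_mul_apply_le _ x).trans
        (mul_le_mul_of_nonneg_right (hX i) (norm_nonneg _))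
    _ = M ^ 2 * ∑ i, ‖R i x‖ ^ 2 := by simp only [mul_pow, Finset.mul_sum]
    _ ≤ M ^ 2 * ‖x‖ ^ 2 := by gcongr; exact sum_norm_apply_sq_le_norm_sq _ hR hRorth x
    _ = (M * ‖x‖) ^ 2 := by ring
  exact (pow_le_pow_iff_left₀ (norm_nonneg _) (by positivity) two_ne_zero).mp hsq

end Operators

theorem mul_sum_mul_mul_mul_eq {A ι : Type*} [Semiring A] [Fintype ι] {L R : ι → A}
    (hL : ∀ i, IsIdempotentElem (L i)) (hLorth : Pairwise fun i j => L i * L j = 0)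
    (hR : ∀ i, IsIdempotentElem (R i)) (X : ι → A) (i : ι) :
    L i * (∑ j, L j * X j * R j) * R i = L i * X i * R i := by
  rw [Finset.mul_sum, Finset.sum_mul, Finset.sum_eq_single i]
  · simp only [← mul_assoc, (hL i).eq]
    simp only [mul_assoc, (hR i).eq]
  · intro j _ hji
    simp only [← mul_assoc, hLorth hji.symm, zero_mul]
  · simp

theorem norm_mul_mul_le_norm_sum {A ι : Type*} [NormedRing A] [StarRing A] [CStarRing A]
    [Fintype ι] {L R : ι → A} (hL : ∀ i, IsStarProjection (L i))
    (hLorth : Pairwise fun i j => L i * L j = 0) (hR : ∀ i, IsStarProjection (R i))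
    (X : ι → A) (i : ι) : ‖L i * X i * R i‖ ≤ ‖∑ j, L j * X j * R j‖ := by
  rw [← mul_sum_mul_mul_mul_eq (fun j => (hL j).isIdempotentElem) hLorth
    (fun j => (hR j).isIdempotentElem) X i]
  calc ‖L i * (∑ j, L j * X j * R j) * R i‖
      ≤ ‖L i‖ * ‖∑ j, L j * X j * R j‖ * ‖R i‖ := norm_mul₃_le
    _ ≤ 1 * ‖∑ j, L j * X j * R j‖ * 1 := by
      gcongr
      exacts [(hL i).norm_le _, (hR i).norm_le _]
    _ = ‖∑ j, L j * X j * R j‖ := by ring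

section ProjOrCompl

variable {A : Type*} [Ring A]

def projOrCompl (p : A) : Bool → A
  | true => p
  | false => 1 - p

theorem IsStarProjection.projOrCompl [StarRing A] {p : A} (hp : IsStarProjection p) :
    ∀ b, IsStarProjection (projOrCompl p b)
  | true => hp
  | false => hp.one_sub

theorem Commute.projOrCompl {p q : A} (h : Commute p q) :
    ∀ a b, Commute (projOrCompl p a) (projOrCompl q b)
  | true, true => h
  | true, false => (Commute.one_right p).sub_right h
  | false, true => (Commute.one_left q).sub_left h
  | false, false => ((Commute.one_right _).sub_right ((Commute.one_left q).sub_left h))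

theorem IsIdempotentElem.projOrCompl_mul_projOrCompl_of_ne {p : A} (hp : IsIdempotentElem p) :
    ∀ {a b : Bool}, a ≠ b → projOrCompl p a * projOrCompl p b = 0
  | true, false, _ => hp.mul_one_sub_self
  | false, true, _ => hp.one_sub_mul_self

def blockProj (p q : A) (i : Bool × Bool) : A := projOrCompl p i.1 * projOrCompl q i.2

theorem IsStarProjection.blockProj [StarRing A] {p q : A} (hp : IsStarProjection p)
    (hq : IsStarProjection q) (hpq : Commute p q) (i : Bool × Bool) :
    IsStarProjection (blockProj p q i) :=
  (hp.projOrCompl _).mul (hq.projOrCompl _) (hpq.projOrCompl _ _)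

theorem blockProj_mul_blockProj_of_ne {p q : A} (hp : IsIdempotentElem p)
    (hq : IsIdempotentElem q) (hpq : Commute p q) {i j : Bool × Bool} (hij : i ≠ j) :
    blockProj p q i * blockProj p q j = 0 := by
  rw [blockProj, blockProj, (hpq.projOrCompl j.1 i.2).symm.mul_mul_mul_comm]
  rcases not_and_or.mp (mt Prod.ext_iff.mpr hij) with h₁ | h₂
  · rw [hp.projOrCompl_mul_projOrCompl_of_ne h₁, zero_mul]
  · rw [hq.projOrCompl_mul_projOrCompl_of_ne h₂, mul_zero]

theorem iterated_commutator_eq_four_smul (p q t : A) :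
    (p - (1 - p)) * ((q - (1 - q)) * t - t * (q - (1 - q)))
        - ((q - (1 - q)) * t - t * (q - (1 - q))) * (p - (1 - p)) =
      4 • (p * q * t * (1 - q) * (1 - p) - p * (1 - q) * t * q * (1 - p)
        - (1 - p) * q * t * (1 - q) * p + (1 - p) * (1 - q) * t * q * p) := by
  noncomm_ring

theorem four_blocks_eq_sum_blockProj (p q t : A) :
    p * q * t * (1 - q) * (1 - p) - p * (1 - q) * t * q * (1 - p)
        - (1 - p) * q * t * (1 - q) * p + (1 - p) * (1 - q) * t * q * p =
      ∑ i : Bool × Bool,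
        blockProj p q i * (if i.1 = i.2 then t else -t) * blockProj q p (!i.2, !i.1) := by
  simp only [Fintype.sum_prod_type, Fintype.sum_bool, blockProj, projOrCompl, Bool.not_true,
    Bool.not_false, Bool.true_eq_false, Bool.false_eq_true, ↓reduceIte]
  noncomm_ring

end ProjOrCompl

/-- For commuting orthogonal projections `P, Q` on a complex Hilbert space and a
bounded operator `T`, the iterated commutator `[P-(1-P),[Q-(1-Q),T]]` has norm at most `4` times
the maximum of the norms of `PQ T Q⊥P⊥`, `PQ⊥ T Q P⊥`, `P⊥Q T Q⊥P`, `P⊥Q⊥ T Q P`; conversely each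
of these four operators has norm at most `(1/4)` of the norm of the iterated commutator. -/
theorem iterated_commutator_norm_equiv_four_blocks
    {H : Type*} [NormedAddCommGroup H] [InnerProductSpace ℂ H] [CompleteSpace H]
    (P Q : H →L[ℂ] H) (hP : IsIdempotentElem P) (hPsa : IsSelfAdjoint P)
    (hQ : IsIdempotentElem Q) (hQsa : IsSelfAdjoint Q)
    (hPQ : P * Q = Q * P) (T : H →L[ℂ] H) :
    ‖(P - (1 - P)) * ((Q - (1 - Q)) * T - T * (Q - (1 - Q)))
        - ((Q - (1 - Q)) * T - T * (Q - (1 - Q))) * (P - (1 - P))‖ ≤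
      4 * max (max ‖P * Q * T * (1 - Q) * (1 - P)‖ ‖P * (1 - Q) * T * Q * (1 - P)‖)
              (max ‖(1 - P) * Q * T * (1 - Q) * P‖ ‖(1 - P) * (1 - Q) * T * Q * P‖) ∧
    ‖P * Q * T * (1 - Q) * (1 - P)‖ ≤
      (1 / 4) * ‖(P - (1 - P)) * ((Q - (1 - Q)) * T - T * (Q - (1 - Q)))
        - ((Q - (1 - Q)) * T - T * (Q - (1 - Q))) * (P - (1 - P))‖ ∧
    ‖P * (1 - Q) * T * Q * (1 - P)‖ ≤
      (1 / 4) * ‖(P - (1 - P)) * ((Q - (1 - Q)) * T - T * (Q - (1 - Q)))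
        - ((Q - (1 - Q)) * T - T * (Q - (1 - Q))) * (P - (1 - P))‖ ∧
    ‖(1 - P) * Q * T * (1 - Q) * P‖ ≤
      (1 / 4) * ‖(P - (1 - P)) * ((Q - (1 - Q)) * T - T * (Q - (1 - Q)))
        - ((Q - (1 - Q)) * T - T * (Q - (1 - Q))) * (P - (1 - P))‖ ∧
    ‖(1 - P) * (1 - Q) * T * Q * P‖ ≤
      (1 / 4) * ‖(P - (1 - P)) * ((Q - (1 - Q)) * T - T * (Q - (1 - Q)))
        - ((Q - (1 - Q)) * T - T * (Q - (1 - Q))) * (P - (1 - P))‖ := by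
  have hPp : IsStarProjection P := ⟨hP, hPsa⟩
  have hQp : IsStarProjection Q := ⟨hQ, hQsa⟩
  let X (i : Bool × Bool) : H →L[ℂ] H := if i.1 = i.2 then T else -T
  have hL := hPp.blockProj hQp hPQ
  have hR (i : Bool × Bool) := hQp.blockProj hPp hPQ.symm (!i.2, !i.1)
  have hLorth : Pairwise fun i j => blockProj P Q i * blockProj P Q j = 0 := fun _ _ =>
    blockProj_mul_blockProj_of_ne hP hQ hPQ
  have hRorth : Pairwise fun i j : Bool × Bool =>
      blockProj Q P (!i.2, !i.1) * blockProj Q P (!j.2, !j.1) = 0 := fun i j hij =>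
    blockProj_mul_blockProj_of_ne hQ hP hPQ.symm (by contrapose! hij; simp_all [Prod.ext_iff])
  have hblock i := norm_mul_mul_le_norm_sum hL hLorth hR X i
  rw [iterated_commutator_eq_four_smul, RCLike.norm_nsmul ℂ, nsmul_eq_mul, Nat.cast_ofNat,
    four_blocks_eq_sum_blockProj]
  refine ⟨?_, ?_, ?_, ?_, ?_⟩
  · gcongr
    refine norm_sum_mul_mul_le (fun i => (hL i).isSelfAdjoint) hLorth hR hRorth X ?_
    rintro ⟨_ | _, _ | _⟩ <;> simp [X, blockProj, projOrCompl, mul_assoc]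
  all_goals rw [one_div, inv_mul_cancel_left₀ four_ne_zero]
  · simpa [X, blockProj, projOrCompl, mul_assoc] using hblock (true, true)
  · simpa [X, blockProj, projOrCompl, mul_assoc] using hblock (true, false)
  · simpa [X, blockProj, projOrCompl, mul_assoc] using hblock (false, true)
  · simpa [X, blockProj, projOrCompl, mul_assoc] using hblock (false, false)
end

section
/- Let H be a Hilbert space, P an orthogonal projection, and W a unitary operator on H such that W*ⁿ P Wⁿ converges strongly to the identity as n → ∞. If T is a bounded operator on H with W*ⁿ T Wⁿ = T for all n, then ‖T‖ ≤ sup_n ‖W*ⁿ(PTP)Wⁿ‖ ≤ ‖PTP‖, hence ‖PTP‖ = ‖T‖. -/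
open Filter

/-- Let `P` be an orthogonal projection and `W` a unitary on a complex Hilbert
space with `W*ⁿ P Wⁿ → 1` strongly. If `T` is a bounded operator with `W*ⁿ T Wⁿ = T` for all `n`,
then `‖T‖ ≤ sup_n ‖W*ⁿ (PTP) Wⁿ‖ ≤ ‖PTP‖`, hence `‖PTP‖ = ‖T‖`. -/
theorem compression_norm_eq_of_shift_invariance
    {H : Type*} [NormedAddCommGroup H] [InnerProductSpace ℂ H] [CompleteSpace H]
    (P W T : H →L[ℂ] H)
    (hP : IsIdempotentElem P) (hPsa : IsSelfAdjoint P)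
    (hW₁ : W * ContinuousLinearMap.adjoint W = 1)
    (hW₂ : ContinuousLinearMap.adjoint W * W = 1)
    (hconv : ∀ f : H,
      Tendsto (fun n : ℕ => ((ContinuousLinearMap.adjoint W) ^ n * P * W ^ n) f) atTop (nhds f))
    (hT : ∀ n : ℕ, (ContinuousLinearMap.adjoint W) ^ n * T * W ^ n = T) :
    ‖T‖ ≤ (⨆ n : ℕ, ‖(ContinuousLinearMap.adjoint W) ^ n * (P * T * P) * W ^ n‖) ∧
    (⨆ n : ℕ, ‖(ContinuousLinearMap.adjoint W) ^ n * (P * T * P) * W ^ n‖) ≤ ‖P * T * P‖ ∧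
    ‖P * T * P‖ = ‖T‖ := by
  set A := ContinuousLinearMap.adjoint W with hA
  -- basic norm bounds
  have hnW : ‖W‖ * ‖W‖ ≤ 1 := by
    have := ContinuousLinearMap.norm_adjoint_comp_self W
    rw [← this]
    calc ‖A ∘L W‖ = ‖(1 : H →L[ℂ] H)‖ := by rw [show A ∘L W = A * W from rfl, hW₂]
    _ ≤ 1 := ContinuousLinearMap.norm_id_le
  have hWle : ‖W‖ ≤ 1 := by nlinarith [norm_nonneg W]
  have hnA : ‖A‖ * ‖A‖ ≤ 1 := by
    have := ContinuousLinearMap.norm_adjoint_comp_self A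
    rw [← this]
    have h' : ContinuousLinearMap.adjoint A = W := by
      rw [hA, ContinuousLinearMap.adjoint_adjoint]
    calc ‖ContinuousLinearMap.adjoint A ∘L A‖ = ‖(1 : H →L[ℂ] H)‖ := by
          rw [h', show W ∘L A = W * A from rfl, hW₁]
    _ ≤ 1 := ContinuousLinearMap.norm_id_le
  have hAle : ‖A‖ ≤ 1 := by nlinarith [norm_nonneg A]
  have hPle : ‖P‖ ≤ 1 := by
    have h1 : ‖P‖ * ‖P‖ = ‖P‖ := by
      have := ContinuousLinearMap.norm_adjoint_comp_self P
      rw [hPsa.adjoint_eq] at this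
      rw [← this, show P ∘L P = P * P from rfl, hP.eq]
    nlinarith [norm_nonneg P]
  have hone : ‖(1 : H →L[ℂ] H)‖ ≤ 1 := ContinuousLinearMap.norm_id_le
  have hpow : ∀ (B : H →L[ℂ] H), ‖B‖ ≤ 1 → ∀ n : ℕ, ‖B ^ n‖ ≤ 1 := by
    intro B hB n
    induction n with
    | zero => simpa using hone
    | succ n ih =>
      rw [pow_succ]
      calc ‖B ^ n * B‖ ≤ ‖B ^ n‖ * ‖B‖ := norm_mul_le _ _
      _ ≤ 1 * 1 := mul_le_mul ih hB (norm_nonneg _) zero_le_one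
      _ = 1 := one_mul 1
  have hAnle : ∀ n : ℕ, ‖A ^ n‖ ≤ 1 := hpow A hAle
  have hWnle : ∀ n : ℕ, ‖W ^ n‖ ≤ 1 := hpow W hWle
  -- conjugation norm bound
  have hconj : ∀ (B : H →L[ℂ] H) (n : ℕ), ‖A ^ n * B * W ^ n‖ ≤ ‖B‖ := by
    intro B n
    calc ‖A ^ n * B * W ^ n‖ ≤ ‖A ^ n * B‖ * ‖W ^ n‖ := norm_mul_le _ _
    _ ≤ ‖A ^ n‖ * ‖B‖ * ‖W ^ n‖ := by
        have := norm_mul_le (A ^ n) B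
        nlinarith [norm_nonneg (W ^ n), norm_nonneg (A ^ n * B)]
    _ ≤ 1 * ‖B‖ * 1 :=
        mul_le_mul (mul_le_mul (hAnle n) le_rfl (norm_nonneg B) zero_le_one) (hWnle n)
          (norm_nonneg _) (by positivity)
    _ = ‖B‖ := by ring
  -- inverse relations for powers
  have hcomm : Commute A W := by
    unfold Commute SemiconjBy; rw [hW₂, hW₁]
  have hAWn : ∀ n : ℕ, A ^ n * W ^ n = 1 := by
    intro n; rw [← hcomm.mul_pow, hW₂, one_pow]
  have hWAn : ∀ n : ℕ, W ^ n * A ^ n = 1 := by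
    intro n; rw [← hcomm.symm.mul_pow, hW₁, one_pow]
  -- key identity
  have hTinv : ∀ n : ℕ, W ^ n * T * A ^ n = T := by
    intro n
    have := congrArg (fun X => W ^ n * X * A ^ n) (hT n)
    rw [← this]
    calc W ^ n * (A ^ n * T * W ^ n) * A ^ n
        = (W ^ n * A ^ n) * T * (W ^ n * A ^ n) := by noncomm_ring
    _ = T := by rw [hWAn n, one_mul, mul_one]
  set Q : ℕ → (H →L[ℂ] H) := fun n => A ^ n * P * W ^ n with hQ
  have hkey : ∀ n : ℕ, A ^ n * (P * T * P) * W ^ n = Q n * T * Q n := by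
    intro n
    rw [hQ]
    simp only
    calc A ^ n * (P * T * P) * W ^ n
        = A ^ n * P * (T) * (P * W ^ n) := by noncomm_ring
    _ = A ^ n * P * (W ^ n * T * A ^ n) * (P * W ^ n) := by rw [hTinv n]
    _ = A ^ n * P * W ^ n * T * (A ^ n * P * W ^ n) := by noncomm_ring
  -- supremum and its bound
  have hbdd : BddAbove (Set.range fun n : ℕ => ‖A ^ n * (P * T * P) * W ^ n‖) := by
    refine ⟨‖P * T * P‖, ?_⟩
    rintro x ⟨n, rfl⟩
    exact hconj (P * T * P) n
  have hsup_le : (⨆ n : ℕ, ‖A ^ n * (P * T * P) * W ^ n‖) ≤ ‖P * T * P‖ :=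
    ciSup_le fun n => hconj (P * T * P) n
  set S := ⨆ n : ℕ, ‖A ^ n * (P * T * P) * W ^ n‖ with hS
  have hS0 : 0 ≤ S := le_trans (norm_nonneg _) (le_ciSup hbdd 0)
  -- norm of Q n bounded by ‖P‖ ≤ 1
  have hQle : ∀ n : ℕ, ‖Q n‖ ≤ 1 := fun n => le_trans (hconj P n) hPle
  -- strong convergence of Q n T Q n to T
  have hmain : ∀ f : H, Tendsto (fun n : ℕ => (Q n) (T ((Q n) f))) atTop (nhds (T f)) := by
    intro f
    rw [tendsto_iff_norm_sub_tendsto_zero]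
    have hTQ : Tendsto (fun n : ℕ => ‖T ((Q n) f) - T f‖) atTop (nhds 0) := by
      have h1 : Tendsto (fun n : ℕ => T ((Q n) f)) atTop (nhds (T f)) :=
        (T.continuous.tendsto f).comp (hconv f)
      simpa using (h1.sub (tendsto_const_nhds : Tendsto (fun _ : ℕ => T f) atTop (nhds (T f)))).norm
    have hQTf : Tendsto (fun n : ℕ => ‖(Q n) (T f) - T f‖) atTop (nhds 0) := by
      simpa [hQ] using ((hconv (T f)).sub (tendsto_const_nhds : Tendsto (fun _ : ℕ => T f) atTop (nhds (T f)))).norm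
    have hbound : ∀ n : ℕ, ‖(Q n) (T ((Q n) f)) - T f‖ ≤
        ‖T ((Q n) f) - T f‖ + ‖(Q n) (T f) - T f‖ := by
      intro n
      calc ‖(Q n) (T ((Q n) f)) - T f‖
          = ‖((Q n) (T ((Q n) f)) - (Q n) (T f)) + ((Q n) (T f) - T f)‖ := by
            rw [sub_add_sub_cancel]
      _ ≤ ‖(Q n) (T ((Q n) f)) - (Q n) (T f)‖ + ‖(Q n) (T f) - T f‖ := norm_add_le _ _
      _ ≤ ‖T ((Q n) f) - T f‖ + ‖(Q n) (T f) - T f‖ := by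
            gcongr
            calc ‖(Q n) (T ((Q n) f)) - (Q n) (T f)‖ = ‖(Q n) (T ((Q n) f) - T f)‖ := by
                  rw [map_sub]
            _ ≤ ‖Q n‖ * ‖T ((Q n) f) - T f‖ := (Q n).le_opNorm _
            _ ≤ 1 * ‖T ((Q n) f) - T f‖ :=
                  mul_le_mul_of_nonneg_right (hQle n) (norm_nonneg _)
            _ = ‖T ((Q n) f) - T f‖ := one_mul _
    have hlim : Tendsto (fun n : ℕ => ‖T ((Q n) f) - T f‖ + ‖(Q n) (T f) - T f‖)
        atTop (nhds 0) := by
      simpa using hTQ.add hQTf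
    exact squeeze_zero (fun n => norm_nonneg _) hbound hlim
  -- first inequality
  have hT_le : ‖T‖ ≤ S := by
    refine T.opNorm_le_bound hS0 fun f => ?_
    have hlim : Tendsto (fun n : ℕ => ‖(Q n) (T ((Q n) f))‖) atTop (nhds ‖T f‖) :=
      (hmain f).norm
    refine le_of_tendsto hlim (Eventually.of_forall fun n => ?_)
    have h1 : (Q n) (T ((Q n) f)) = (A ^ n * (P * T * P) * W ^ n) f := by
      rw [hkey n]; rfl
    rw [h1]
    calc ‖(A ^ n * (P * T * P) * W ^ n) f‖ ≤ ‖A ^ n * (P * T * P) * W ^ n‖ * ‖f‖ :=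
          (A ^ n * (P * T * P) * W ^ n).le_opNorm f
    _ ≤ S * ‖f‖ := mul_le_mul_of_nonneg_right (le_ciSup hbdd n) (norm_nonneg f)
  refine ⟨hT_le, hsup_le, ?_⟩
  -- final equality
  have hPTP_le : ‖P * T * P‖ ≤ ‖T‖ := by
    calc ‖P * T * P‖ ≤ ‖P * T‖ * ‖P‖ := norm_mul_le _ _
    _ ≤ ‖P‖ * ‖T‖ * ‖P‖ := by
        have := norm_mul_le P T
        nlinarith [norm_nonneg P, norm_nonneg (P * T)]
    _ ≤ 1 * ‖T‖ * 1 :=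
        mul_le_mul (mul_le_mul hPle le_rfl (norm_nonneg T) zero_le_one) hPle
          (norm_nonneg _) (by positivity)
    _ = ‖T‖ := by ring
  exact le_antisymm hPTP_le (le_trans hT_le hsup_le)
end

section
/- Let H be a Hilbert space and (Sₗ) a family of unitaries on H, T and P bounded operators, and b a bounded operator such that S_{-l} b S_l = b for all l. Suppose S_{-l} T S_l → 1 and S_{-l} P S_l → 1 in the strong operator topology, and T', P' are bounded operators commuting with all Sₗ. Then S_{-l}(T' T b P' P)S_l converges strongly to T' b P', and consequently ‖T' b P'‖ ≤ ‖T' T b P' P‖. -/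
/-!
Since `Sₗ S₋ₗ = 1`, the invariance of `b` makes `b` commute with `S₋ₗ`, as do `T'` and `P'`; hence
`S₋ₗ (T' T b P' P) Sₗ = T' (S₋ₗ T Sₗ) b P' (S₋ₗ P Sₗ)`. The conjugates of `T` are bounded by `‖T‖`
uniformly in `l`, which lets strong convergence pass through the product. The norm inequality
follows because every conjugate of `T' T b P' P` has norm at most `‖T' T b P' P‖`, and a strong
limit of operators cannot exceed their common norm bound.
-/

open Filter Topology

section Monoid

variable {M : Type*} [Monoid M]

theorem commute_of_conj_eq {s s' b : M} (hss' : s * s' = 1) (hb : s' * b * s = b) :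
    Commute b s' :=
  calc b * s' = s' * b * (s * s') := by rw [← mul_assoc, hb]
    _ = s' * b := by rw [hss', mul_one]

theorem conj_mul_eq_mul_conj_mul_conj {s s' b t t' p p' : M} (hss' : s * s' = 1)
    (hb : s' * b * s = b) (ht' : Commute t' s') (hp' : Commute p' s') :
    s' * (t' * t * b * p' * p) * s = t' * ((s' * t * s) * (b * p' * (s' * p * s))) :=
  calc s' * (t' * t * b * p' * p) * s = t' * (s' * t * (s * s') * b * p' * p * s) := by
        simp only [hss', mul_one, ← mul_assoc, ← ht'.eq]
    _ = t' * (s' * t * s * (b * s' * p' * p * s)) := by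
        rw [(commute_of_conj_eq hss' hb).eq]; simp only [mul_assoc]
    _ = t' * ((s' * t * s) * (b * p' * (s' * p * s))) := by
        rw [mul_assoc b, ← hp'.eq]; simp only [mul_assoc]

end Monoid

namespace ContinuousLinearMap

variable {𝕜 E : Type*} [NontriviallyNormedField 𝕜] [NormedAddCommGroup E] [NormedSpace 𝕜 E]

theorem norm_mul_mul_le_of_isometry {u v : E →L[𝕜] E}
    (hu : ∀ x, ‖u x‖ = ‖x‖) (hv : ∀ x, ‖v x‖ = ‖x‖) (A : E →L[𝕜] E) :
    ‖u * A * v‖ ≤ ‖A‖ :=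
  (u * A * v).opNorm_le_bound (norm_nonneg A) fun x => by
    simpa only [mul_apply_eq_comp, hu, hv] using A.le_opNorm (v x)

theorem tendsto_apply_of_tendsto_of_norm_le {ι : Type*} {l : Filter ι}
    {A : ι → E →L[𝕜] E} {z : ι → E} {y w : E} {C : ℝ}
    (hA : Tendsto (fun i => A i y) l (𝓝 w)) (hAC : ∀ i, ‖A i‖ ≤ C)
    (hz : Tendsto z l (𝓝 y)) :
    Tendsto (fun i => A i (z i)) l (𝓝 w) := by
  rw [tendsto_iff_norm_sub_tendsto_zero] at hA hz ⊢
  refine squeeze_zero (fun _ => norm_nonneg _) (fun i => ?_)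
    (by simpa using (hz.const_mul C).add hA)
  calc ‖A i (z i) - w‖ = ‖A i (z i - y) + (A i y - w)‖ := by
        rw [map_sub, sub_add_sub_cancel]
    _ ≤ ‖A i (z i - y)‖ + ‖A i y - w‖ := norm_add_le _ _
    _ ≤ C * ‖z i - y‖ + ‖A i y - w‖ := by
        gcongr; exact (A i).le_of_opNorm_le (hAC i) _

theorem norm_le_of_tendsto_apply {ι : Type*} {l : Filter ι} [l.NeBot]
    {A : ι → E →L[𝕜] E} {A₀ : E →L[𝕜] E} {C : ℝ}
    (hA : ∀ x, Tendsto (fun i => A i x) l (𝓝 (A₀ x))) (hAC : ∀ i, ‖A i‖ ≤ C) (hC : 0 ≤ C) :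
    ‖A₀‖ ≤ C :=
  A₀.opNorm_le_bound hC fun x =>
    le_of_tendsto (hA x).norm (Eventually.of_forall fun i => (A i).le_of_opNorm_le (hAC i) x)

end ContinuousLinearMap

theorem insertion_of_operators_preserves_norm_lower_bound_general
    {H : Type*} [NormedAddCommGroup H] [InnerProductSpace ℂ H]
    (S : ℤ → (H →L[ℂ] H)) (b T P T' P' : H →L[ℂ] H)
    (hS₁ : ∀ l, S l * S (-l) = 1)
    (hSiso : ∀ l (x : H), ‖S l x‖ = ‖x‖)
    (hb : ∀ l, S (-l) * b * S l = b)
    (hT : ∀ x : H, Tendsto (fun l : ℕ => (S (-(l : ℤ)) * T * S (l : ℤ)) x) atTop (nhds x))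
    (hP : ∀ x : H, Tendsto (fun l : ℕ => (S (-(l : ℤ)) * P * S (l : ℤ)) x) atTop (nhds x))
    (hT' : ∀ l, T' * S l = S l * T') (hP' : ∀ l, P' * S l = S l * P') :
    (∀ x : H, Tendsto (fun l : ℕ => (S (-(l : ℤ)) * (T' * T * b * P' * P) * S (l : ℤ)) x)
        atTop (nhds ((T' * b * P') x))) ∧
    ‖T' * b * P'‖ ≤ ‖T' * T * b * P' * P‖ := by
  have hconj_le (X : H →L[ℂ] H) (l : ℤ) : ‖S (-l) * X * S l‖ ≤ ‖X‖ :=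
    ContinuousLinearMap.norm_mul_mul_le_of_isometry (hSiso _) (hSiso _) X
  have hconv (x : H) : Tendsto (fun l : ℕ => (S (-(l : ℤ)) * (T' * T * b * P' * P) * S (l : ℤ)) x)
      atTop (𝓝 ((T' * b * P') x)) := by
    have hbP : Tendsto (fun l : ℕ => (b * P' * (S (-(l : ℤ)) * P * S (l : ℤ))) x) atTop
        (𝓝 ((b * P') x)) :=
      ((b * P').continuous.tendsto x).comp (hP x)
    have hinner : Tendsto (fun l : ℕ => (S (-(l : ℤ)) * T * S (l : ℤ))
        ((b * P' * (S (-(l : ℤ)) * P * S (l : ℤ))) x)) atTop (𝓝 ((b * P') x)) :=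
      ContinuousLinearMap.tendsto_apply_of_tendsto_of_norm_le (hT _) (fun l => hconj_le T l) hbP
    simp only [conj_mul_eq_mul_conj_mul_conj (hS₁ _) (hb _) (hT' _) (hP' _), mul_assoc T' b,
      mul_apply_eq_comp T']
    exact (T'.continuous.tendsto _).comp hinner
  exact ⟨hconv, ContinuousLinearMap.norm_le_of_tendsto_apply hconv (fun l : ℕ => hconj_le _ l)
    (norm_nonneg _)⟩

/-- Let `(Sₗ)_{l∈ℤ}` be a family of unitaries on a complex Hilbert space with
`S_{-l}` inverse to `Sₗ`, `b` a bounded operator with `S_{-l} b Sₗ = b` for all `l`, and suppose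
`S_{-l} T Sₗ → 1` and `S_{-l} P Sₗ → 1` strongly as `l → +∞`. If `T', P'` are bounded operators
commuting with all `Sₗ`, then `S_{-l}(T' T b P' P)Sₗ` converges strongly to `T' b P'`, and
consequently `‖T' b P'‖ ≤ ‖T' T b P' P‖`. -/
theorem insertion_of_operators_preserves_norm_lower_bound
    {H : Type*} [NormedAddCommGroup H] [InnerProductSpace ℂ H] [CompleteSpace H]
    (S : ℤ → (H →L[ℂ] H)) (b T P T' P' : H →L[ℂ] H)
    (hS₁ : ∀ l, S l * S (-l) = 1) (hS₂ : ∀ l, S (-l) * S l = 1)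
    (hSiso : ∀ l (x : H), ‖S l x‖ = ‖x‖)
    (hb : ∀ l, S (-l) * b * S l = b)
    (hT : ∀ x : H, Tendsto (fun l : ℕ => (S (-(l : ℤ)) * T * S (l : ℤ)) x) atTop (nhds x))
    (hP : ∀ x : H, Tendsto (fun l : ℕ => (S (-(l : ℤ)) * P * S (l : ℤ)) x) atTop (nhds x))
    (hT' : ∀ l, T' * S l = S l * T') (hP' : ∀ l, P' * S l = S l * P') :
    (∀ x : H, Tendsto (fun l : ℕ => (S (-(l : ℤ)) * (T' * T * b * P' * P) * S (l : ℤ)) x)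
        atTop (nhds ((T' * b * P') x))) ∧
    ‖T' * b * P'‖ ≤ ‖T' * T * b * P' * P‖ :=
  insertion_of_operators_preserves_norm_lower_bound_general S b T P T' P' hS₁ hSiso hb hT hP hT' hP'
end
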